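/- arXiv:1802.00240 — 6 statements merged into one kernel-verified Lean document; each statement's English description precedes it below -/
import Mathlib

section
/- Let f₁, f₂ : ℝ → ℝ be twice differentiable with af₁'(u₁)f₂(u₂) + f₁(u₁)f₂'(u₂) ≠ 0 at a point (u₁,u₂). Then the isotropic Gaussian curvature of the graph x = f₁(y+az)f₂(z) at the corresponding point equals [f₁f₂f₁''f₂'' − (f₁'f₂')²] / (af₁'f₂ + f₁f₂')⁴. -/
noncomputable def wyy (w : ℝ → ℝ → ℝ) (y z : ℝ) : ℝ :=
  deriv (fun t => deriv (fun t' => w t' z) t) y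

noncomputable def wzz (w : ℝ → ℝ → ℝ) (y z : ℝ) : ℝ :=
  deriv (fun s => deriv (fun s' => w y s') s) z

noncomputable def wyz (w : ℝ → ℝ → ℝ) (y z : ℝ) : ℝ :=
  deriv (fun s => deriv (fun t => w t s) y) z

noncomputable def wy (w : ℝ → ℝ → ℝ) (y z : ℝ) : ℝ := deriv (fun t => w t z) y

noncomputable def wz (w : ℝ → ℝ → ℝ) (y z : ℝ) : ℝ := deriv (fun s => w y s) z

/-- Isotropic Gaussian curvature of the graph x = w(y,z). -/
noncomputable def K2 (w : ℝ → ℝ → ℝ) (y z : ℝ) : ℝ :=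
  (wyy w y z * wzz w y z - (wyz w y z)^2) / (wz w y z)^4

/-- Isotropic mean curvature of the graph x = w(y,z). -/
noncomputable def H2 (w : ℝ → ℝ → ℝ) (y z : ℝ) : ℝ :=
  ((wz w y z)^2 * wyy w y z - 2 * wy w y z * wz w y z * wyz w y z
    + (1 + (wy w y z)^2) * wzz w y z) / (2 * (wz w y z)^3)

noncomputable def D2 (f : ℝ → ℝ) : ℝ → ℝ := deriv (deriv f)

/-!
With `u₁ = y + a z`, the chain rule makes `∂_y` act on `f₁` as `d/du₁`, and `∂_z` act as
`a · d/du₁` on `f₁` and as `d/du₂` on `f₂`. Hence `w_yy = f₁''f₂`, `w_yz = a f₁''f₂ + f₁'f₂'`,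
`w_zz = a² f₁''f₂ + 2a f₁'f₂' + f₁f₂''` and `w_z = a f₁'f₂ + f₁f₂'`; in `w_yy w_zz - w_yz²`
all terms involving `a` cancel, leaving `f₁f₂f₁''f₂'' - (f₁'f₂')²`.
-/

def affineFactorableType2 (a : ℝ) (f₁ f₂ : ℝ → ℝ) : ℝ → ℝ → ℝ :=
  fun y z => f₁ (y + a * z) * f₂ z

lemma hasDerivAt_comp_const_add_mul {g : ℝ → ℝ} {g' : ℝ} (y a s : ℝ)
    (hg : HasDerivAt g g' (y + a * s)) : HasDerivAt (fun s => g (y + a * s)) (a * g') s := by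
  simpa [Function.comp_def, mul_comm] using
    hg.comp s (((hasDerivAt_id' s).const_mul a).const_add y)

section AffineFactorableType2

variable {a : ℝ} {f₁ f₂ : ℝ → ℝ}

-- No differentiability is needed: `deriv` commutes with translation and with multiplication
-- by a constant even where it takes its junk value.
lemma deriv_fst_affineFactorableType2 (y z : ℝ) :
    deriv (fun t => affineFactorableType2 a f₁ f₂ t z) y = deriv f₁ (y + a * z) * f₂ z := by
  simp only [affineFactorableType2]
  rw [deriv_mul_const_field, deriv_comp_add_const]

lemma wyy_affineFactorableType2 (y z : ℝ) :
    wyy (affineFactorableType2 a f₁ f₂) y z = D2 f₁ (y + a * z) * f₂ z := by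
  simp only [wyy, deriv_fst_affineFactorableType2]
  rw [deriv_mul_const_field, deriv_comp_add_const (deriv f₁), D2]

lemma hasDerivAt_snd_affineFactorableType2 {y z : ℝ}
    (hf₁ : DifferentiableAt ℝ f₁ (y + a * z)) (hf₂ : DifferentiableAt ℝ f₂ z) :
    HasDerivAt (fun s => affineFactorableType2 a f₁ f₂ y s)
      (a * deriv f₁ (y + a * z) * f₂ z + f₁ (y + a * z) * deriv f₂ z) z :=
  (hasDerivAt_comp_const_add_mul y a z hf₁.hasDerivAt).mul hf₂.hasDerivAt

lemma wz_affineFactorableType2 {y z : ℝ}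
    (hf₁ : DifferentiableAt ℝ f₁ (y + a * z)) (hf₂ : DifferentiableAt ℝ f₂ z) :
    wz (affineFactorableType2 a f₁ f₂) y z
      = a * deriv f₁ (y + a * z) * f₂ z + f₁ (y + a * z) * deriv f₂ z :=
  (hasDerivAt_snd_affineFactorableType2 hf₁ hf₂).deriv

lemma wyz_affineFactorableType2 {y z : ℝ}
    (hf₁' : DifferentiableAt ℝ (deriv f₁) (y + a * z)) (hf₂ : DifferentiableAt ℝ f₂ z) :
    wyz (affineFactorableType2 a f₁ f₂) y z
      = a * D2 f₁ (y + a * z) * f₂ z + deriv f₁ (y + a * z) * deriv f₂ z := by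
  simp only [wyz, deriv_fst_affineFactorableType2]
  exact ((hasDerivAt_comp_const_add_mul y a z hf₁'.hasDerivAt).mul hf₂.hasDerivAt).deriv

lemma wzz_affineFactorableType2 (hf₁ : Differentiable ℝ f₁) (hf₂ : Differentiable ℝ f₂)
    {y z : ℝ} (hf₁' : DifferentiableAt ℝ (deriv f₁) (y + a * z))
    (hf₂' : DifferentiableAt ℝ (deriv f₂) z) :
    wzz (affineFactorableType2 a f₁ f₂) y z
      = a ^ 2 * D2 f₁ (y + a * z) * f₂ z + 2 * a * deriv f₁ (y + a * z) * deriv f₂ z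
        + f₁ (y + a * z) * D2 f₂ z := by
  have hwz : (fun s => deriv (fun s' => affineFactorableType2 a f₁ f₂ y s') s)
      = fun s => a * deriv f₁ (y + a * s) * f₂ s + f₁ (y + a * s) * deriv f₂ s :=
    funext fun s => (hasDerivAt_snd_affineFactorableType2 (hf₁ _) (hf₂ s)).deriv
  have hf₁'_comp := hasDerivAt_comp_const_add_mul y a z hf₁'.hasDerivAt
  have hf₁_comp := hasDerivAt_comp_const_add_mul y a z (hf₁ (y + a * z)).hasDerivAt
  have hwzz : HasDerivAt
      (fun s => a * deriv f₁ (y + a * s) * f₂ s + f₁ (y + a * s) * deriv f₂ s)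
      (a * (a * D2 f₁ (y + a * z)) * f₂ z + a * deriv f₁ (y + a * z) * deriv f₂ z
        + (a * deriv f₁ (y + a * z) * deriv f₂ z + f₁ (y + a * z) * D2 f₂ z)) z :=
    ((hf₁'_comp.const_mul a).mul (hf₂ z).hasDerivAt).add (hf₁_comp.mul hf₂'.hasDerivAt)
  rw [wzz, hwz, hwzz.deriv]
  ring

end AffineFactorableType2

theorem stmt12_general (a : ℝ) (f₁ f₂ : ℝ → ℝ)
    (hf₁ : ∀ t, DifferentiableAt ℝ f₁ t) (hf₁' : ∀ t, DifferentiableAt ℝ (deriv f₁) t)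
    (hf₂ : ∀ t, DifferentiableAt ℝ f₂ t) (hf₂' : ∀ t, DifferentiableAt ℝ (deriv f₂) t)
    (y z : ℝ) :
    K2 (fun y z => f₁ (y + a * z) * f₂ z) y z =
      (f₁ (y + a * z) * f₂ z * D2 f₁ (y + a * z) * D2 f₂ z
        - (deriv f₁ (y + a * z) * deriv f₂ z)^2) /
      (a * deriv f₁ (y + a * z) * f₂ z + f₁ (y + a * z) * deriv f₂ z)^4 := by
  change K2 (affineFactorableType2 a f₁ f₂) y z = _
  rw [K2, wyy_affineFactorableType2, wzz_affineFactorableType2 hf₁ hf₂ (hf₁' _) (hf₂' _),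
    wyz_affineFactorableType2 (hf₁' _) (hf₂ _), wz_affineFactorableType2 (hf₁ _) (hf₂ _)]
  congr 1
  ring

theorem stmt12 (a : ℝ) (ha : a ≠ 0) (f₁ f₂ : ℝ → ℝ)
    (hf₁ : ∀ t, DifferentiableAt ℝ f₁ t) (hf₁' : ∀ t, DifferentiableAt ℝ (deriv f₁) t)
    (hf₂ : ∀ t, DifferentiableAt ℝ f₂ t) (hf₂' : ∀ t, DifferentiableAt ℝ (deriv f₂) t)
    (y z : ℝ)
    (hreg : a * deriv f₁ (y + a * z) * f₂ z + f₁ (y + a * z) * deriv f₂ z ≠ 0) :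
    K2 (fun y z => f₁ (y + a * z) * f₂ z) y z =
      (f₁ (y + a * z) * f₂ z * D2 f₁ (y + a * z) * D2 f₂ z
        - (deriv f₁ (y + a * z) * deriv f₂ z)^2) /
      (a * deriv f₁ (y + a * z) * f₂ z + f₁ (y + a * z) * deriv f₂ z)^4 :=
  stmt12_general a f₁ f₂ hf₁ hf₁' hf₂ hf₂' y z
end

section
/- Let a ≠ 0, and suppose f₁(u₁) = c₁u₁ + c₂ with c₁ ≠ 0 and f₂ : ℝ → ℝ is twice differentiable and non-constant with af₁'f₂ + f₁f₂' nowhere zero. Then the Gaussian curvature K = [f₁f₂f₁''f₂'' − (f₁'f₂')²]/(af₁'f₂ + f₁f₂')⁴ of the type 2 affine factorable surface x = f₁(y+az)f₂(z) cannot be a nonzero constant. -/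
theorem stmt13 (a c₁ c₂ K₀ : ℝ) (f₁ f₂ : ℝ → ℝ)
    (hf₂ : ∀ t, DifferentiableAt ℝ f₂ t) (hf₂' : ∀ t, DifferentiableAt ℝ (deriv f₂) t)
    (ha : a ≠ 0) (hc₁ : c₁ ≠ 0)
    (h₁ : ∀ t, f₁ t = c₁ * t + c₂)
    (h₂nc : ∃ s t, f₂ s ≠ f₂ t)
    (hreg : ∀ u₁ u₂ : ℝ, a * deriv f₁ u₁ * f₂ u₂ + f₁ u₁ * deriv f₂ u₂ ≠ 0)
    (hK₀ : K₀ ≠ 0)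
    (hK : ∀ u₁ u₂ : ℝ,
      (f₁ u₁ * f₂ u₂ * D2 f₁ u₁ * D2 f₂ u₂ - (deriv f₁ u₁ * deriv f₂ u₂)^2) /
        (a * deriv f₁ u₁ * f₂ u₂ + f₁ u₁ * deriv f₂ u₂)^4 = K₀) :
    False := by
  have hf₁ : f₁ = fun t => c₁ * t + c₂ := funext h₁
  subst hf₁
  have hd1 : deriv (fun t : ℝ => c₁ * t + c₂) = fun _ => c₁ := by
    funext t
    have h : HasDerivAt (fun t : ℝ => c₁ * t + c₂) (c₁ * 1) t :=
      ((hasDerivAt_id t).const_mul c₁).add_const c₂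
    simpa using h.deriv
  have hd2 : D2 (fun t : ℝ => c₁ * t + c₂) = fun _ => 0 := by
    unfold D2; rw [hd1]; funext t; simp
  set d := deriv f₂ 0 with hdv
  set v := f₂ 0 with hvv
  -- derive the specialized equation
  have key : ∀ u₁ : ℝ, -(c₁ * d)^2 / (a * c₁ * v + (c₁ * u₁ + c₂) * d)^4 = K₀ := by
    intro u₁
    have h := hK u₁ 0
    rw [hd1, hd2] at h
    simp only at h
    rw [← h]; ring
  by_cases hd : d = 0
  · have := key 0
    rw [hd] at this
    simp at this
    exact hK₀ this.symm
  · have hB : c₁ * d ≠ 0 := mul_ne_zero hc₁ hd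
    have e1 := key ((1 - (a * c₁ * v + c₂ * d)) / (c₁ * d))
    have e2 := key ((2 - (a * c₁ * v + c₂ * d)) / (c₁ * d))
    have w1 : a * c₁ * v + (c₁ * ((1 - (a * c₁ * v + c₂ * d)) / (c₁ * d)) + c₂) * d = 1 := by
      field_simp; ring
    have w2 : a * c₁ * v + (c₁ * ((2 - (a * c₁ * v + c₂ * d)) / (c₁ * d)) + c₂) * d = 2 := by
      field_simp; ring
    rw [w1] at e1
    rw [w2] at e2
    norm_num at e1 e2
    have : (c₁ * d)^2 = 0 := by nlinarith [e1, e2]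
    exact hB (pow_eq_zero_iff two_ne_zero |>.mp this)
end

section
/- Suppose f₁, f₂ : ℝ → ℝ are twice differentiable with f₂'/f₂ = c₁ a nonzero constant (so f₂(u) = Ce^{c₁u}), a ≠ 0, and the type 2 Gaussian curvature [f₁f₂f₁''f₂'' − (f₁'f₂')²]/(af₁'f₂ + f₁f₂')⁴ is a nonzero constant K₀ with the regularity condition af₁'f₂ + f₁f₂' nowhere zero. Then a contradiction follows: one must have af₁' + c₁f₁ = 0 identically, violating regularity. -/
theorem stmt14 (a c₁ K₀ : ℝ) (f₁ f₂ : ℝ → ℝ)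
    (hf₁ : ∀ t, DifferentiableAt ℝ f₁ t) (hf₁' : ∀ t, DifferentiableAt ℝ (deriv f₁) t)
    (hf₂ : ∀ t, DifferentiableAt ℝ f₂ t) (hf₂' : ∀ t, DifferentiableAt ℝ (deriv f₂) t)
    (ha : a ≠ 0) (hc₁ : c₁ ≠ 0)
    (h₂0 : ∀ t, f₂ t ≠ 0)
    (h₂ : ∀ t, deriv f₂ t = c₁ * f₂ t)
    (hreg : ∀ u₁ u₂ : ℝ, a * deriv f₁ u₁ * f₂ u₂ + f₁ u₁ * deriv f₂ u₂ ≠ 0)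
    (hK₀ : K₀ ≠ 0)
    (hK : ∀ u₁ u₂ : ℝ,
      (f₁ u₁ * f₂ u₂ * D2 f₁ u₁ * D2 f₂ u₂ - (deriv f₁ u₁ * deriv f₂ u₂)^2) /
        (a * deriv f₁ u₁ * f₂ u₂ + f₁ u₁ * deriv f₂ u₂)^4 = K₀) :
    False := by
  -- second derivative of f₂
  have hD2 : ∀ t, D2 f₂ t = c₁ ^ 2 * f₂ t := by
    intro t
    have hfun : deriv f₂ = fun s => c₁ * f₂ s := funext h₂
    have : D2 f₂ t = deriv (fun s => c₁ * f₂ s) t := by rw [D2, hfun]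
    rw [this, deriv_const_mul c₁ (hf₂ t), h₂ t]; ring
  -- A ≠ 0
  have hA : ∀ u₁, a * deriv f₁ u₁ + c₁ * f₁ u₁ ≠ 0 := by
    intro u₁ h
    apply hreg u₁ 0
    rw [h₂ 0]
    linear_combination f₂ 0 * h
  -- f₂^2 is not constant
  have hex : ∃ u, f₂ u ^ 2 ≠ f₂ 0 ^ 2 := by
    by_contra h
    push_neg at h
    have hd : HasDerivAt (fun s => f₂ s ^ 2) ((2 : ℕ) * f₂ 0 ^ (2 - 1) * deriv f₂ 0) 0 :=
      (hf₂ 0).hasDerivAt.pow 2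
    have hcst : (fun s : ℝ => f₂ s ^ 2) = fun _ => f₂ 0 ^ 2 := funext h
    rw [hcst] at hd
    have h0 : ((2 : ℕ) : ℝ) * f₂ 0 ^ (2 - 1) * deriv f₂ 0 = 0 :=
      hd.unique (hasDerivAt_const 0 _)
    rw [h₂ 0] at h0
    simp at h0
    rcases h0 with h0 | h0 | h0
    · exact h₂0 0 h0
    · exact hc₁ h0
    · exact h₂0 0 h0
  -- key polynomial identity
  have key : ∀ u₁ u₂, c₁ ^ 2 * (f₂ u₂) ^ 2 * (f₁ u₁ * D2 f₁ u₁ - (deriv f₁ u₁) ^ 2)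
      = K₀ * (f₂ u₂) ^ 4 * (a * deriv f₁ u₁ + c₁ * f₁ u₁) ^ 4 := by
    intro u₁ u₂
    have h := hK u₁ u₂
    rw [div_eq_iff (pow_ne_zero 4 (hreg u₁ u₂))] at h
    rw [hD2 u₂, h₂ u₂] at h
    linear_combination h
  obtain ⟨u, hu⟩ := hex
  have h20 := pow_ne_zero 2 (h₂0 0)
  have h2u := pow_ne_zero 2 (h₂0 u)
  set M := f₁ 0 * D2 f₁ 0 - (deriv f₁ 0) ^ 2 with hM
  set A := a * deriv f₁ 0 + c₁ * f₁ 0 with hAd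
  have e0 : c₁ ^ 2 * M = K₀ * f₂ 0 ^ 2 * A ^ 4 := by
    apply mul_left_cancel₀ h20
    linear_combination key 0 0
  have eu : c₁ ^ 2 * M = K₀ * f₂ u ^ 2 * A ^ 4 := by
    apply mul_left_cancel₀ h2u
    linear_combination key 0 u
  have h1 : K₀ * f₂ 0 ^ 2 * A ^ 4 = K₀ * f₂ u ^ 2 * A ^ 4 := e0 ▸ eu
  have h2 := mul_right_cancel₀ (pow_ne_zero 4 (hA 0)) h1
  have h3 := mul_left_cancel₀ hK₀ (by linear_combination h2 : K₀ * (f₂ 0 ^ 2) = K₀ * (f₂ u ^ 2))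
  exact hu h3.symm
end

section
/- Let a ≠ 0 and let f₁, f₂ : ℝ → ℝ be twice differentiable with f₁'' = 0 (f₁ affine, non-constant, f₁' = c ≠ 0), f₂ non-constant, f₂' nowhere zero, and af₁'f₂ + f₁f₂' nowhere zero. Then the minimality equation (f₁'f₂)²f₁f₂'' − 2(f₁'f₂')²f₁f₂ + (f₁f₂')²f₂f₁'' + f₁f₂'' + 2af₁'f₂' + a²f₁''f₂ = 0 cannot hold identically. -/
theorem stmt15 (a c : ℝ) (f₁ f₂ : ℝ → ℝ)
    (hf₂ : ∀ t, DifferentiableAt ℝ f₂ t) (hf₂' : ∀ t, DifferentiableAt ℝ (deriv f₂) t)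
    (ha : a ≠ 0) (hc : c ≠ 0)
    (h₁'' : ∀ t, D2 f₁ t = 0) (h₁' : ∀ t, deriv f₁ t = c)
    (h₂nc : ∃ s t, f₂ s ≠ f₂ t)
    (h₂'0 : ∀ t, deriv f₂ t ≠ 0)
    (hreg : ∀ u₁ u₂ : ℝ, a * deriv f₁ u₁ * f₂ u₂ + f₁ u₁ * deriv f₂ u₂ ≠ 0)
    (hmin : ∀ u₁ u₂ : ℝ,
      (deriv f₁ u₁ * f₂ u₂)^2 * f₁ u₁ * D2 f₂ u₂
        - 2 * (deriv f₁ u₁ * deriv f₂ u₂)^2 * f₁ u₁ * f₂ u₂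
        + (f₁ u₁ * deriv f₂ u₂)^2 * f₂ u₂ * D2 f₁ u₁
        + f₁ u₁ * D2 f₂ u₂ + 2 * a * deriv f₁ u₁ * deriv f₂ u₂
        + a^2 * D2 f₁ u₁ * f₂ u₂ = 0) :
    False := by
  have hdiff : ∀ t, DifferentiableAt ℝ f₁ t := by
    intro t
    by_contra h
    exact hc ((h₁' t).symm.trans (deriv_zero_of_not_differentiableAt h))
  have hne : f₁ 0 ≠ f₁ 1 := by
    intro heq
    obtain ⟨x, _, hxd⟩ := exists_deriv_eq_slope f₁ (by norm_num : (0:ℝ) < 1)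
      (fun t _ => (hdiff t).continuousAt.continuousWithinAt) (fun t _ => (hdiff t).differentiableWithinAt)
    rw [h₁' x, heq] at hxd
    simp at hxd
    exact hc hxd
  have h0 := hmin 0 0
  have h1 := hmin 1 0
  rw [h₁'' 0, h₁' 0] at h0
  rw [h₁'' 1, h₁' 1] at h1
  have key : ((c * f₂ 0)^2 * D2 f₂ 0 - 2*(c * deriv f₂ 0)^2 * f₂ 0 + D2 f₂ 0)
      * (f₁ 0 - f₁ 1) = 0 := by linear_combination h0 - h1
  rcases mul_eq_zero.mp key with hP | hq
  · have : 2 * a * c * deriv f₂ 0 = 0 := by linear_combination h0 - f₁ 0 * hP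
    exact h₂'0 0 (by
      rcases mul_eq_zero.mp this with h | h
      · rcases mul_eq_zero.mp h with h' | h'
        · norm_num at h'
          exact absurd h' ha
        · exact absurd h' hc
      · exact h)
  · exact hne (by linarith)
end

section
/- Let a ≠ 0 and f₁, f₂ : ℝ → ℝ be twice differentiable, non-constant, with f₁'', f₂'' nowhere zero, f₁, f₂, f₁', f₂' nowhere zero, and af₁'f₂ + f₁f₂' nowhere zero. Then (f₁'f₂)²f₁f₂'' − 2(f₁'f₂')²f₁f₂ + (f₁f₂')²f₂f₁'' + f₁f₂'' + 2af₁'f₂' + a²f₁''f₂ = 0 cannot hold identically; i.e., there is no minimal affine factorable surface of type 2 in I³ other than non-isotropic planes. -/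
/-!
Write `p = f₁'/f₁`, `q = f₂'/f₂` and `Wᵢ = fᵢ fᵢ'' - fᵢ'²`, so that `p' = W₁/f₁²`, `q' = W₂/f₂²`.
Divided by `f₁ f₂`, the equation becomes
`(a p + q)² + a² p' + q' + f₁'² W₂ + W₁ f₂'² = 0`.
Its mixed second differences say that the curves `u ↦ (f₁'², W₁, p)` and `v ↦ (W₂, f₂'², 2 a q)`
in `ℝ³` have orthogonal difference spans, so one of them lies on a line.

If `p` (or `q`) is constant then `W₁ = 0` (or `W₂ = 0`); as `f₁'²` and `f₂'²` are not constant
(`fᵢ' fᵢ'' ≠ 0`), the equation then forces `W₁ = W₂ = 0` and `a p + q = 0`, contradicting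
regularity. Otherwise, for the factor `f` whose curve lies on a line, both `f'²` and `W` are
affine functions of the non-constant `g = f'/f`.
Differentiating `f'² = h g + h₀` gives `2 f' f'' f² = h W`, which turns into a quadratic relation
in `g`. Its coefficients vanish, which leaves `f f' = h ≠ 0`;
then `f²` has constant nonzero slope and `f` has a zero.
-/

open Module Set

theorem collinear_or_collinear_of_inner_vsub_eq_zero {E α β : Type*} [NormedAddCommGroup E]
    [InnerProductSpace ℝ E] [FiniteDimensional ℝ E] (hE : finrank ℝ E ≤ 3)
    {x : α → E} {y : β → E} (h : ∀ u u' v v', inner ℝ (x u - x u') (y v - y v') = 0) :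
    Collinear ℝ (range x) ∨ Collinear ℝ (range y) := by
  have hortho : vectorSpan ℝ (range x) ⟂ vectorSpan ℝ (range y) := by
    rw [vectorSpan_def, vectorSpan_def, Submodule.isOrtho_span]
    rintro _ ⟨_, ⟨u, rfl⟩, _, ⟨u', rfl⟩, rfl⟩ _ ⟨_, ⟨v, rfl⟩, _, ⟨v', rfl⟩, rfl⟩
    exact h u u' v v'
  have hle := Submodule.finrank_mono (Submodule.isOrtho_iff_le.1 hortho)
  have hsum := (vectorSpan ℝ (range y)).finrank_add_finrank_orthogonal
  rw [collinear_iff_finrank_le_one, collinear_iff_finrank_le_one]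
  omega

theorem Collinear.exists_affine_coord {α ι : Type*} {x : α → EuclideanSpace ℝ ι}
    (hx : Collinear ℝ (range x)) {i : ι} (hi : ∃ s t, x s i ≠ x t i) (j : ι) :
    ∃ c d, ∀ u, x u j = c * x u i + d := by
  obtain ⟨s, t, hst⟩ := hi
  obtain ⟨w, hw⟩ := (collinear_iff_of_mem (mem_range_self t)).1 hx
  have hcoord : ∀ u, ∃ r : ℝ, ∀ k, x u k = r * w k + x t k := fun u => by
    obtain ⟨r, hr⟩ := hw (x u) (mem_range_self u)
    exact ⟨r, fun k => by rw [hr]; simp⟩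
  have hwi : w i ≠ 0 := by
    obtain ⟨r, hr⟩ := hcoord s
    intro h0
    exact hst (by rw [hr, h0]; ring)
  refine ⟨w j / w i, x t j - w j / w i * x t i, fun u => ?_⟩
  obtain ⟨r, hr⟩ := hcoord u
  rw [hr i, hr j]
  field_simp
  ring

theorem exists_ne_of_hasDerivAt_ne_zero {F : ℝ → ℝ} {F' x : ℝ} (hF : HasDerivAt F F' x)
    (hF' : F' ≠ 0) : ∃ s t, F s ≠ F t := by
  by_contra! hc
  rw [show F = fun _ => F x from funext fun s => hc s x] at hF
  exact hF' (hF.unique (hasDerivAt_const x _))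

theorem exists_eq_zero_of_hasDerivAt_const {F : ℝ → ℝ} {m : ℝ} (hm : m ≠ 0)
    (hF : ∀ x, HasDerivAt F m x) : ∃ x, F x = 0 := by
  have hG : ∀ x, HasDerivAt (fun x => F x - x * m) 0 x := fun x =>
    ((hF x).sub (hasDerivAt_mul_const m)).congr_deriv (sub_self m)
  have hconst := is_const_of_deriv_eq_zero (fun x => (hG x).differentiableAt)
    fun x => (hG x).deriv
  refine ⟨-(F 0 / m), ?_⟩
  have := hconst (-(F 0 / m)) 0
  field_simp at this
  linear_combination this

theorem exists_eq_zero_of_mul_deriv_eq_const {f : ℝ → ℝ} (hf : ∀ t, DifferentiableAt ℝ f t)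
    {c : ℝ} (hc : c ≠ 0) (hprod : ∀ t, f t * deriv f t = c) : ∃ t, f t = 0 := by
  obtain ⟨t, ht⟩ := exists_eq_zero_of_hasDerivAt_const (mul_ne_zero two_ne_zero hc)
    fun t => ((hf t).hasDerivAt.pow 2).congr_deriv (by simp [← hprod t]; ring)
  exact ⟨t, pow_eq_zero_iff two_ne_zero |>.1 ht⟩

theorem quadratic_coeffs_eq_zero {T : Type*} [TopologicalSpace T] [PreconnectedSpace T]
    {g : T → ℝ} (hg : Continuous g) (hnc : ∃ s t, g s ≠ g t) {c₂ c₁ c₀ : ℝ}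
    (h : ∀ t, c₂ * g t ^ 2 + c₁ * g t + c₀ = 0) : c₂ = 0 ∧ c₁ = 0 ∧ c₀ = 0 := by
  open Polynomial in
  obtain ⟨s, t, hst⟩ := hnc
  have hinf : (range g).Infinite :=
    (isPreconnected_range hg).infinite_of_nontrivial ⟨g s, ⟨s, rfl⟩, g t, ⟨t, rfl⟩, hst⟩
  have hP : C c₂ * X ^ 2 + C c₁ * X + C c₀ = 0 := by
    refine eq_zero_of_infinite_isRoot _ (hinf.mono ?_)
    rintro _ ⟨t, rfl⟩
    simpa using h t
  refine ⟨?_, ?_, ?_⟩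
  · simpa using congrArg (coeff · 2) hP
  · simpa using congrArg (coeff · 1) hP
  · simpa using congrArg (coeff · 0) hP

-- The Wronskian of `f` and `f'`; it equals `f ^ 2 * (logDeriv f)'`.
noncomputable def selfWronskian (f : ℝ → ℝ) (t : ℝ) : ℝ := f t * D2 f t - deriv f t ^ 2

theorem hasDerivAt_logDeriv {f : ℝ → ℝ} {t : ℝ} (hf : DifferentiableAt ℝ f t)
    (hf' : DifferentiableAt ℝ (deriv f) t) (h0 : f t ≠ 0) :
    HasDerivAt (logDeriv f) (selfWronskian f t / f t ^ 2) t := by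
  refine (hf'.hasDerivAt.div hf.hasDerivAt h0).congr_deriv ?_
  unfold selfWronskian D2
  ring

theorem selfWronskian_eq_zero_of_logDeriv_const {f : ℝ → ℝ} {t : ℝ} (hf : DifferentiableAt ℝ f t)
    (hf' : DifferentiableAt ℝ (deriv f) t) (h0 : f t ≠ 0)
    (hc : ∀ s s', logDeriv f s = logDeriv f s') : selfWronskian f t = 0 := by
  have hder := hasDerivAt_logDeriv hf hf' h0
  rw [show logDeriv f = fun _ => logDeriv f t from funext fun s => hc s t] at hder
  have := hder.unique (hasDerivAt_const t _)
  exact (div_eq_zero_iff.1 this).resolve_right (pow_ne_zero 2 h0)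

theorem hasDerivAt_sq_deriv {f : ℝ → ℝ} {t : ℝ} (hf' : DifferentiableAt ℝ (deriv f) t) :
    HasDerivAt (fun t => deriv f t ^ 2) (2 * deriv f t * D2 f t) t := by
  refine (hf'.hasDerivAt.pow 2).congr_deriv ?_
  rw [D2]
  ring

theorem mul_D2_mul_sq_eq_of_sq_deriv_eq {f : ℝ → ℝ} (hf : ∀ t, DifferentiableAt ℝ f t)
    (hf' : ∀ t, DifferentiableAt ℝ (deriv f) t) (h0 : ∀ t, f t ≠ 0) {h h₀ : ℝ}
    (hsq : ∀ t, deriv f t ^ 2 = h * logDeriv f t + h₀) (t : ℝ) :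
    2 * deriv f t * D2 f t * f t ^ 2 = h * selfWronskian f t := by
  have hr : HasDerivAt (fun t => deriv f t ^ 2) (h * (selfWronskian f t / f t ^ 2)) t := by
    simpa only [hsq] using ((hasDerivAt_logDeriv (hf t) (hf' t) (h0 t)).const_mul h).add_const h₀
  have := (hasDerivAt_sq_deriv (hf' t)).unique hr
  field_simp [h0 t] at this
  linear_combination this

theorem false_of_affine_in_logDeriv {f : ℝ → ℝ} (hf : ∀ t, DifferentiableAt ℝ f t)
    (hf' : ∀ t, DifferentiableAt ℝ (deriv f) t) (h0 : ∀ t, f t ≠ 0) (h'0 : ∀ t, deriv f t ≠ 0)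
    (h''0 : ∀ t, D2 f t ≠ 0) (hnc : ∃ s t, logDeriv f s ≠ logDeriv f t) {h h₀ e τ : ℝ}
    (hsq : ∀ t, deriv f t ^ 2 = h * logDeriv f t + h₀)
    (hW : ∀ t, selfWronskian f t = e * logDeriv f t + τ) : False := by
  have hder := mul_D2_mul_sq_eq_of_sq_deriv_eq hf hf' h0 hsq
  have hgf : ∀ t, logDeriv f t * f t = deriv f t := fun t => div_mul_cancel₀ _ (h0 t)
  have hh : h ≠ 0 := by
    rintro rfl
    simpa [h0 0, h'0 0, h''0 0] using hder 0
  -- multiply the differentiated relation by `logDeriv f` and eliminate `f'²`, `f f''`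
  have hquad : ∀ t, h * (2 * h + e) * logDeriv f t ^ 2 + (h * τ + 4 * h * h₀ + 2 * e * h₀)
      * logDeriv f t + 2 * h₀ * (τ + h₀) = 0 := fun t => by
    unfold selfWronskian at hW hder
    linear_combination (-2 * deriv f t ^ 2 - 2 * (e * logDeriv f t + τ)
      - 2 * (h * logDeriv f t + h₀)) * hsq t + (h * logDeriv f t - 2 * deriv f t ^ 2) * hW t
      + logDeriv f t * hder t - 2 * deriv f t * D2 f t * f t * hgf t
  have hcont : Continuous (logDeriv f) := continuous_iff_continuousAt.2 fun t =>
    (hasDerivAt_logDeriv (hf t) (hf' t) (h0 t)).continuousAt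
  obtain ⟨hc₂, hc₁, hc₀⟩ := quadratic_coeffs_eq_zero hcont hnc hquad
  have he : e = -2 * h := by
    linarith [(mul_eq_zero.1 hc₂).resolve_left hh]
  have hτ : τ = 0 := (mul_eq_zero.1 (by linear_combination hc₁ - 2 * h₀ * he :
    h * τ = 0)).resolve_left hh
  have hh₀ : h₀ = 0 := pow_eq_zero_iff two_ne_zero |>.1 (by linear_combination hc₀ / 2 - h₀ * hτ)
  have hprod : ∀ t, f t * deriv f t = h := fun t => mul_left_cancel₀ (h'0 t) <| by
    linear_combination f t * hsq t + h * hgf t + f t * hh₀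
  obtain ⟨t, ht⟩ := exists_eq_zero_of_mul_deriv_eq_const hf hh hprod
  exact h0 t ht

theorem logDeriv_form_of_minimal {a : ℝ} {f₁ f₂ : ℝ → ℝ} {u v : ℝ} (h₁ : f₁ u ≠ 0)
    (h₂ : f₂ v ≠ 0)
    (hmin : (deriv f₁ u * f₂ v)^2 * f₁ u * D2 f₂ v
        - 2 * (deriv f₁ u * deriv f₂ v)^2 * f₁ u * f₂ v
        + (f₁ u * deriv f₂ v)^2 * f₂ v * D2 f₁ u
        + f₁ u * D2 f₂ v + 2 * a * deriv f₁ u * deriv f₂ v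
        + a^2 * D2 f₁ u * f₂ v = 0) :
    (a * logDeriv f₁ u + logDeriv f₂ v) ^ 2 + a ^ 2 * selfWronskian f₁ u / f₁ u ^ 2
      + selfWronskian f₂ v / f₂ v ^ 2 + deriv f₁ u ^ 2 * selfWronskian f₂ v
      + selfWronskian f₁ u * deriv f₂ v ^ 2 = 0 := by
  unfold selfWronskian
  rw [logDeriv_apply, logDeriv_apply]
  field_simp
  linear_combination f₁ u * f₂ v * hmin

theorem mul_logDeriv_add_logDeriv_ne_zero {a : ℝ} {f₁ f₂ : ℝ → ℝ} {u v : ℝ} (h₁ : f₁ u ≠ 0)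
    (h₂ : f₂ v ≠ 0) (hreg : a * deriv f₁ u * f₂ v + f₁ u * deriv f₂ v ≠ 0) :
    a * logDeriv f₁ u + logDeriv f₂ v ≠ 0 := by
  have : a * logDeriv f₁ u + logDeriv f₂ v
      = (a * deriv f₁ u * f₂ v + f₁ u * deriv f₂ v) / (f₁ u * f₂ v) := by
    rw [logDeriv_apply, logDeriv_apply]
    field_simp
  rw [this]
  exact div_ne_zero hreg (mul_ne_zero h₁ h₂)

theorem false_of_logDeriv_const_left {a : ℝ} {f₁ f₂ : ℝ → ℝ}
    (hI : ∀ u v, (a * logDeriv f₁ u + logDeriv f₂ v) ^ 2 + a ^ 2 * selfWronskian f₁ u / f₁ u ^ 2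
      + selfWronskian f₂ v / f₂ v ^ 2 + deriv f₁ u ^ 2 * selfWronskian f₂ v
      + selfWronskian f₁ u * deriv f₂ v ^ 2 = 0)
    (hreg : ∀ u v, a * logDeriv f₁ u + logDeriv f₂ v ≠ 0)
    (hφ : ∃ s t, deriv f₁ s ^ 2 ≠ deriv f₁ t ^ 2) (hc : ∀ s t, logDeriv f₁ s = logDeriv f₁ t)
    (hW₁ : ∀ u, selfWronskian f₁ u = 0) : False := by
  obtain ⟨s, t, hst⟩ := hφ
  have hW₂ : ∀ v, selfWronskian f₂ v = 0 := fun v =>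
    (mul_eq_zero.1 (by
      linear_combination hI s v - hI t v
        - a * (a * logDeriv f₁ s + a * logDeriv f₁ t + 2 * logDeriv f₂ v) * hc s t
        - (a ^ 2 / f₁ s ^ 2 + deriv f₂ v ^ 2) * hW₁ s
        + (a ^ 2 / f₁ t ^ 2 + deriv f₂ v ^ 2) * hW₁ t :
      (deriv f₁ s ^ 2 - deriv f₁ t ^ 2) * selfWronskian f₂ v = 0)).resolve_left (sub_ne_zero.2 hst)
  refine hreg 0 0 (pow_eq_zero_iff two_ne_zero |>.1 ?_)
  linear_combination hI 0 0 - (a ^ 2 / f₁ 0 ^ 2 + deriv f₂ 0 ^ 2) * hW₁ 0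
    - (1 / f₂ 0 ^ 2 + deriv f₁ 0 ^ 2) * hW₂ 0

theorem false_of_logDeriv_const_right {a : ℝ} {f₁ f₂ : ℝ → ℝ}
    (hI : ∀ u v, (a * logDeriv f₁ u + logDeriv f₂ v) ^ 2 + a ^ 2 * selfWronskian f₁ u / f₁ u ^ 2
      + selfWronskian f₂ v / f₂ v ^ 2 + deriv f₁ u ^ 2 * selfWronskian f₂ v
      + selfWronskian f₁ u * deriv f₂ v ^ 2 = 0)
    (hreg : ∀ u v, a * logDeriv f₁ u + logDeriv f₂ v ≠ 0)
    (hψ : ∃ s t, deriv f₂ s ^ 2 ≠ deriv f₂ t ^ 2) (hc : ∀ s t, logDeriv f₂ s = logDeriv f₂ t)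
    (hW₂ : ∀ v, selfWronskian f₂ v = 0) : False := by
  obtain ⟨s, t, hst⟩ := hψ
  have hW₁ : ∀ u, selfWronskian f₁ u = 0 := fun u =>
    (mul_eq_zero.1 (by
      linear_combination hI u s - hI u t
        - (2 * a * logDeriv f₁ u + logDeriv f₂ s + logDeriv f₂ t) * hc s t
        - (1 / f₂ s ^ 2 + deriv f₁ u ^ 2) * hW₂ s
        + (1 / f₂ t ^ 2 + deriv f₁ u ^ 2) * hW₂ t :
      (deriv f₂ s ^ 2 - deriv f₂ t ^ 2) * selfWronskian f₁ u = 0)).resolve_left (sub_ne_zero.2 hst)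
  refine hreg 0 0 (pow_eq_zero_iff two_ne_zero |>.1 ?_)
  linear_combination hI 0 0 - (a ^ 2 / f₁ 0 ^ 2 + deriv f₂ 0 ^ 2) * hW₁ 0
    - (1 / f₂ 0 ^ 2 + deriv f₁ 0 ^ 2) * hW₂ 0

theorem stmt16_general (a : ℝ) (f₁ f₂ : ℝ → ℝ)
    (hf₁ : ∀ t, DifferentiableAt ℝ f₁ t) (hf₁' : ∀ t, DifferentiableAt ℝ (deriv f₁) t)
    (hf₂ : ∀ t, DifferentiableAt ℝ f₂ t) (hf₂' : ∀ t, DifferentiableAt ℝ (deriv f₂) t)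
    (ha : a ≠ 0)
    (h₁'' : ∀ t, D2 f₁ t ≠ 0) (h₂'' : ∀ t, D2 f₂ t ≠ 0)
    (h₁0 : ∀ t, f₁ t ≠ 0) (h₂0 : ∀ t, f₂ t ≠ 0)
    (h₁'0 : ∀ t, deriv f₁ t ≠ 0) (h₂'0 : ∀ t, deriv f₂ t ≠ 0)
    (hreg : ∀ u₁ u₂ : ℝ, a * deriv f₁ u₁ * f₂ u₂ + f₁ u₁ * deriv f₂ u₂ ≠ 0)
    (hmin : ∀ u₁ u₂ : ℝ,
      (deriv f₁ u₁ * f₂ u₂)^2 * f₁ u₁ * D2 f₂ u₂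
        - 2 * (deriv f₁ u₁ * deriv f₂ u₂)^2 * f₁ u₁ * f₂ u₂
        + (f₁ u₁ * deriv f₂ u₂)^2 * f₂ u₂ * D2 f₁ u₁
        + f₁ u₁ * D2 f₂ u₂ + 2 * a * deriv f₁ u₁ * deriv f₂ u₂
        + a^2 * D2 f₁ u₁ * f₂ u₂ = 0) :
    False := by
  have hI := fun u v => logDeriv_form_of_minimal (h₁0 u) (h₂0 v) (hmin u v)
  have hreg' := fun u v => mul_logDeriv_add_logDeriv_ne_zero (h₁0 u) (h₂0 v) (hreg u v)
  have hp : ∃ s t, logDeriv f₁ s ≠ logDeriv f₁ t := by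
    by_contra! hc
    exact false_of_logDeriv_const_left hI hreg'
      (exists_ne_of_hasDerivAt_ne_zero (hasDerivAt_sq_deriv (hf₁' 0)) (by simp [h₁'0, h₁'']))
      hc fun u => selfWronskian_eq_zero_of_logDeriv_const (hf₁ u) (hf₁' u) (h₁0 u) hc
  have hq : ∃ s t, logDeriv f₂ s ≠ logDeriv f₂ t := by
    by_contra! hc
    exact false_of_logDeriv_const_right hI hreg'
      (exists_ne_of_hasDerivAt_ne_zero (hasDerivAt_sq_deriv (hf₂' 0)) (by simp [h₂'0, h₂'']))
      hc fun v => selfWronskian_eq_zero_of_logDeriv_const (hf₂ v) (hf₂' v) (h₂0 v) hc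
  let X : ℝ → EuclideanSpace ℝ (Fin 3) :=
    fun u => !₂[deriv f₁ u ^ 2, selfWronskian f₁ u, logDeriv f₁ u]
  let Y : ℝ → EuclideanSpace ℝ (Fin 3) :=
    fun v => !₂[selfWronskian f₂ v, deriv f₂ v ^ 2, 2 * a * logDeriv f₂ v]
  have horth : ∀ u u' v v', inner ℝ (X u - X u') (Y v - Y v') = 0 := fun u u' v v' => by
    simp [X, Y, PiLp.inner_apply, Fin.sum_univ_three]
    linear_combination hI u v - hI u' v - hI u v' + hI u' v'
  rcases collinear_or_collinear_of_inner_vsub_eq_zero (by simp) horth with hX | hY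
  · have hpX : ∃ s t, X s 2 ≠ X t 2 := by simpa [X] using hp
    obtain ⟨h, h₀, hsq⟩ := hX.exists_affine_coord hpX 0
    obtain ⟨e, τ, hW⟩ := hX.exists_affine_coord hpX 1
    exact false_of_affine_in_logDeriv hf₁ hf₁' h₁0 h₁'0 h₁'' hp (by simpa [X] using hsq)
      (by simpa [X] using hW)
  · have hqY : ∃ s t, Y s 2 ≠ Y t 2 := by simpa [Y, ha] using hq
    obtain ⟨h, h₀, hsq⟩ := hY.exists_affine_coord hqY 1
    obtain ⟨e, τ, hW⟩ := hY.exists_affine_coord hqY 0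
    refine false_of_affine_in_logDeriv (h := h * (2 * a)) (h₀ := h₀) (e := e * (2 * a)) (τ := τ)
      hf₂ hf₂' h₂0 h₂'0 h₂'' hq (fun v => ?_) (fun v => ?_)
    · simpa [Y, mul_assoc] using hsq v
    · simpa [Y, mul_assoc] using hW v

theorem stmt16 (a : ℝ) (f₁ f₂ : ℝ → ℝ)
    (hf₁ : ∀ t, DifferentiableAt ℝ f₁ t) (hf₁' : ∀ t, DifferentiableAt ℝ (deriv f₁) t)
    (hf₂ : ∀ t, DifferentiableAt ℝ f₂ t) (hf₂' : ∀ t, DifferentiableAt ℝ (deriv f₂) t)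
    (ha : a ≠ 0)
    (h₁nc : ∃ s t, f₁ s ≠ f₁ t) (h₂nc : ∃ s t, f₂ s ≠ f₂ t)
    (h₁'' : ∀ t, D2 f₁ t ≠ 0) (h₂'' : ∀ t, D2 f₂ t ≠ 0)
    (h₁0 : ∀ t, f₁ t ≠ 0) (h₂0 : ∀ t, f₂ t ≠ 0)
    (h₁'0 : ∀ t, deriv f₁ t ≠ 0) (h₂'0 : ∀ t, deriv f₂ t ≠ 0)
    (hreg : ∀ u₁ u₂ : ℝ, a * deriv f₁ u₁ * f₂ u₂ + f₁ u₁ * deriv f₂ u₂ ≠ 0)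
    (hmin : ∀ u₁ u₂ : ℝ,
      (deriv f₁ u₁ * f₂ u₂)^2 * f₁ u₁ * D2 f₂ u₂
        - 2 * (deriv f₁ u₁ * deriv f₂ u₂)^2 * f₁ u₁ * f₂ u₂
        + (f₁ u₁ * deriv f₂ u₂)^2 * f₂ u₂ * D2 f₁ u₁
        + f₁ u₁ * D2 f₂ u₂ + 2 * a * deriv f₁ u₁ * deriv f₂ u₂
        + a^2 * D2 f₁ u₁ * f₂ u₂ = 0) :
    False :=
  stmt16_general a f₁ f₂ hf₁ hf₁' hf₂ hf₂' ha h₁'' h₂'' h₁0 h₂0 h₁'0 h₂'0 hreg hmin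
end

section
/- Let a ≠ 0, H₀ ≠ 0, and suppose f₁(u₁) = c₄u₁ + c₅ with c₄ ≠ 0 and f₂ : ℝ → ℝ twice differentiable with f₂' nowhere zero. Then the constant mean curvature equation 2H₀(ac₄f₂ + f₁f₂')³ = 2ac₄f₂' + [c₄²f₂²f₂'' − 2c₄²(f₂')²f₂ + f₂'']·f₁ cannot hold identically in (u₁, u₂), since matching coefficients of powers of f₁ forces (f₂')³ = 0. -/
-- The third finite difference at `s = 0, 1, 2, 3` annihilates the affine side and
-- equals `6 * A * b ^ 3` on the cubic side.
theorem mul_pow_three_eq_zero_of_forall_cube_eq_affine {A b c d e : ℝ}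
    (h : ∀ s : ℝ, A * (c + s * b) ^ 3 = d + e * s) : A * b ^ 3 = 0 := by
  linear_combination (h 3 - 3 * h 2 + 3 * h 1 - h 0) / 6

theorem stmt18_general (a H₀ c₄ c₅ : ℝ) (f₁ f₂ : ℝ → ℝ)
    (hH₀ : H₀ ≠ 0) (hc₄ : c₄ ≠ 0)
    (h₁ : ∀ t, f₁ t = c₄ * t + c₅)
    (h₂'0 : ∀ t, deriv f₂ t ≠ 0)
    (hH : ∀ u₁ u₂ : ℝ,
      2 * H₀ * (a * c₄ * f₂ u₂ + f₁ u₁ * deriv f₂ u₂)^3 =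
        2 * a * c₄ * deriv f₂ u₂ +
        (c₄^2 * (f₂ u₂)^2 * D2 f₂ u₂ - 2 * c₄^2 * (deriv f₂ u₂)^2 * f₂ u₂
          + D2 f₂ u₂) * f₁ u₁) :
    False := by
  have hcubic : ∀ s : ℝ, 2 * H₀ * (a * c₄ * f₂ 0 + s * deriv f₂ 0) ^ 3 =
      2 * a * c₄ * deriv f₂ 0 +
      (c₄^2 * (f₂ 0)^2 * D2 f₂ 0 - 2 * c₄^2 * (deriv f₂ 0)^2 * f₂ 0 + D2 f₂ 0) * s := by
    intro s
    obtain ⟨u, rfl⟩ : ∃ u, f₁ u = s := ⟨(s - c₅) / c₄, by rw [h₁]; field_simp; ring⟩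
    exact hH u 0
  have hlead := mul_pow_three_eq_zero_of_forall_cube_eq_affine hcubic
  simp [hH₀, h₂'0 0] at hlead

theorem stmt18 (a H₀ c₄ c₅ : ℝ) (f₁ f₂ : ℝ → ℝ)
    (hf₂ : ∀ t, DifferentiableAt ℝ f₂ t) (hf₂' : ∀ t, DifferentiableAt ℝ (deriv f₂) t)
    (ha : a ≠ 0) (hH₀ : H₀ ≠ 0) (hc₄ : c₄ ≠ 0)
    (h₁ : ∀ t, f₁ t = c₄ * t + c₅)
    (h₂'0 : ∀ t, deriv f₂ t ≠ 0)
    (hH : ∀ u₁ u₂ : ℝ,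
      2 * H₀ * (a * c₄ * f₂ u₂ + f₁ u₁ * deriv f₂ u₂)^3 =
        2 * a * c₄ * deriv f₂ u₂ +
        (c₄^2 * (f₂ u₂)^2 * D2 f₂ u₂ - 2 * c₄^2 * (deriv f₂ u₂)^2 * f₂ u₂
          + D2 f₂ u₂) * f₁ u₁) :
    False :=
  stmt18_general a H₀ c₄ c₅ f₁ f₂ hH₀ hc₄ h₁ h₂'0 hH
end
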